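/- arXiv:2309.02429 — 3 statements merged into one kernel-verified Lean document; each statement's English description precedes it below -/
import Mathlib

section
/- Let f : 𝒫(Ω) → ℝ≥0 be a monotone nondecreasing submodular set function on a finite set Ω with f(∅) = 0, and let k ≥ 1. Let S_greedy be the set of size k obtained by greedily adding, at each of k steps, an element maximizing the marginal gain. Let S* be a maximizer of f over all subsets of size at most k. Then f(S_greedy) ≥ (1 - (1 - 1/k)^k) · f(S*) ≥ (1 - 1/e) · f(S*). -/
/-!
Let `B` be any set of at most `k` elements and let `d` be the largest marginal gain available to
the greedy set `A`. Submodularity bounds the gain of adding all of `B` to `A` by the sum of the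
single-element gains, so `f B ≤ f (A ∪ B) ≤ f A + k d`: the greedy step closes at least a `1/k`
fraction of the gap `f B - f A`. After `k` steps the gap is at most `(1 - 1/k)^k f B ≤ f B / e`.
-/

open Finset

section Submodular

variable {α : Type*} [DecidableEq α] {f : Finset α → ℝ}

theorem le_add_sum_marginal
    (hsub : ∀ X Y : Finset α, X ⊆ Y → ∀ v ∉ Y, f (insert v X) - f X ≥ f (insert v Y) - f Y)
    (A T : Finset α) :
    f (A ∪ T) ≤ f A + ∑ v ∈ T, (f (insert v A) - f A) := by
  induction T using Finset.induction_on with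
  | empty => simp
  | @insert a T haT ih =>
    rw [sum_insert haT, union_insert]
    by_cases haA : a ∈ A
    · simpa [insert_eq_self.mpr haA, insert_eq_self.mpr (mem_union_left T haA)] using ih
    · have hgain := hsub A (A ∪ T) subset_union_left a (by simp [haA, haT])
      linarith

theorem gap_insert_le_of_forall_marginal_le
    (hmono : ∀ X Y : Finset α, X ⊆ Y → f X ≤ f Y)
    (hsub : ∀ X Y : Finset α, X ⊆ Y → ∀ v ∉ Y, f (insert v X) - f X ≥ f (insert v Y) - f Y)
    {k : ℕ} {A B : Finset α} (hB : #B ≤ k) {v : α}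
    (hmax : ∀ w ∉ A, f (insert w A) - f A ≤ f (insert v A) - f A) :
    f B - f (insert v A) ≤ (1 - 1 / (k : ℝ)) * (f B - f A) := by
  set d := f (insert v A) - f A
  have hd : 0 ≤ d := sub_nonneg.mpr (hmono _ _ (subset_insert v A))
  have hmarginal : ∀ w ∈ B, f (insert w A) - f A ≤ d := by
    intro w _
    by_cases hw : w ∈ A
    · simpa [insert_eq_self.mpr hw] using hd
    · exact hmax w hw
  have hcover : f B - f A ≤ d * k :=
    calc f B - f A ≤ f (A ∪ B) - f A := by linarith [hmono B (A ∪ B) subset_union_right]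
      _ ≤ ∑ w ∈ B, (f (insert w A) - f A) := by linarith [le_add_sum_marginal hsub A B]
      _ ≤ #B • d := sum_le_card_nsmul B _ d hmarginal
      _ ≤ d * k := by rw [nsmul_eq_mul, mul_comm]; gcongr
  have hfraction : (f B - f A) / k ≤ d := div_le_of_le_mul₀ k.cast_nonneg hd hcover
  have hsplit : f B - f (insert v A) = (f B - f A) - d := by ring
  rw [hsplit, sub_mul, one_mul, one_div_mul_eq_div]
  linarith

end Submodular

theorem greedy_submodular_guarantee_general {Ω : Type*} [DecidableEq Ω]
    (f : Finset Ω → ℝ)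
    (hmono : ∀ X Y : Finset Ω, X ⊆ Y → f X ≤ f Y)
    (hsub : ∀ X Y : Finset Ω, X ⊆ Y → ∀ v ∉ Y,
      f (insert v X) - f X ≥ f (insert v Y) - f Y)
    (hempty : f ∅ = 0)
    (k : ℕ) (hk : 1 ≤ k)
    (S : ℕ → Finset Ω) (hS0 : S 0 = ∅)
    (hgreedy : ∀ i < k, ∃ v ∉ S i, S (i + 1) = insert v (S i) ∧
      ∀ w ∉ S i, f (insert w (S i)) - f (S i) ≤ f (insert v (S i)) - f (S i))
    (Sstar : Finset Ω) (hSstar_card : Sstar.card ≤ k) :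
    f (S k) ≥ (1 - (1 - 1 / (k : ℝ)) ^ k) * f Sstar ∧
    (1 - (1 - 1 / (k : ℝ)) ^ k) * f Sstar ≥ (1 - 1 / Real.exp 1) * f Sstar := by
  have hratio : 0 ≤ 1 - 1 / (k : ℝ) := by
    rw [sub_nonneg, one_div]; exact Nat.cast_inv_le_one k
  have hstep : ∀ i < k, f Sstar - f (S (i + 1)) ≤ (1 - 1 / (k : ℝ)) * (f Sstar - f (S i)) := by
    intro i hi
    obtain ⟨v, -, hSi, hmax⟩ := hgreedy i hi
    rw [hSi]
    exact gap_insert_le_of_forall_marginal_le hmono hsub hSstar_card hmax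
  have hgap := le_geom (u := fun i ↦ f Sstar - f (S i)) hratio k hstep
  simp only [hS0, hempty, sub_zero] at hgap
  have hfSstar : 0 ≤ f Sstar := hempty ▸ hmono ∅ Sstar (empty_subset Sstar)
  have hexp : (1 - 1 / (k : ℝ)) ^ k ≤ 1 / Real.exp 1 := by
    rw [one_div (Real.exp 1), ← Real.exp_neg]
    exact Real.one_sub_div_pow_le_exp_neg (by exact_mod_cast hk)
  constructor
  · linarith
  · exact mul_le_mul_of_nonneg_right (by linarith) hfSstar

theorem greedy_submodular_guarantee {Ω : Type*} [Fintype Ω] [DecidableEq Ω]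
    (f : Finset Ω → ℝ)
    (hnonneg : ∀ S : Finset Ω, 0 ≤ f S)
    (hmono : ∀ X Y : Finset Ω, X ⊆ Y → f X ≤ f Y)
    (hsub : ∀ X Y : Finset Ω, X ⊆ Y → ∀ v ∉ Y,
      f (insert v X) - f X ≥ f (insert v Y) - f Y)
    (hempty : f ∅ = 0)
    (k : ℕ) (hk : 1 ≤ k) (hcard : k ≤ Fintype.card Ω)
    (S : ℕ → Finset Ω) (hS0 : S 0 = ∅)
    (hgreedy : ∀ i < k, ∃ v ∉ S i, S (i + 1) = insert v (S i) ∧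
      ∀ w ∉ S i, f (insert w (S i)) - f (S i) ≤ f (insert v (S i)) - f (S i))
    (Sstar : Finset Ω) (hSstar_card : Sstar.card ≤ k)
    (hopt : ∀ T : Finset Ω, T.card ≤ k → f T ≤ f Sstar) :
    f (S k) ≥ (1 - (1 - 1 / (k : ℝ)) ^ k) * f Sstar ∧
    (1 - (1 - 1 / (k : ℝ)) ^ k) * f Sstar ≥ (1 - 1 / Real.exp 1) * f Sstar :=
  greedy_submodular_guarantee_general f hmono hsub hempty k hk S hS0 hgreedy Sstar hSstar_card
end

section
/- For a monotone nondecreasing submodular function f with f(∅) = 0 on a finite set Ω, at each step of the greedy algorithm with current set S_i (|S_i| = i < k) and optimum S* of size k, there exists an element v ∉ S_i such that f(S_i ∪ {v}) - f(S_i) ≥ (f(S*) - f(S_i)) / k. -/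
open Finset

theorem greedy_step_aux {Ω : Type*} [Fintype Ω] [DecidableEq Ω]
    (f : Finset Ω → ℝ)
    (hmono : ∀ X Y : Finset Ω, X ⊆ Y → f X ≤ f Y)
    (hsub : ∀ X Y : Finset Ω, X ⊆ Y → ∀ v ∉ Y,
      f (insert v X) - f X ≥ f (insert v Y) - f Y)
    (A : Finset Ω) (B : Finset Ω) :
    f (A ∪ B) - f A ≤ ∑ v ∈ B, (f (insert v A) - f A) := by
  induction B using Finset.induction_on with
  | empty => simp
  | @insert b B hb ih =>
    rw [Finset.sum_insert hb]
    have hunion : A ∪ insert b B = insert b (A ∪ B) := by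
      ext x; simp [or_comm, or_left_comm]
    rw [hunion]
    by_cases hbA : b ∈ A
    · have h1 : insert b A = A := Finset.insert_eq_self.mpr hbA
      have h2 : insert b (A ∪ B) = A ∪ B :=
        Finset.insert_eq_self.mpr (Finset.mem_union_left _ hbA)
      rw [h1, h2]
      linarith
    · have hbAB : b ∉ A ∪ B := by
        simp only [Finset.mem_union, not_or]; exact ⟨hbA, hb⟩
      have := hsub A (A ∪ B) Finset.subset_union_left b hbAB
      linarith

theorem greedy_step_lemma {Ω : Type*} [Fintype Ω] [DecidableEq Ω]
    (f : Finset Ω → ℝ)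
    (hmono : ∀ X Y : Finset Ω, X ⊆ Y → f X ≤ f Y)
    (hsub : ∀ X Y : Finset Ω, X ⊆ Y → ∀ v ∉ Y,
      f (insert v X) - f X ≥ f (insert v Y) - f Y)
    (hempty : f ∅ = 0)
    (k : ℕ) (Sstar : Finset Ω) (hSstar_card : Sstar.card = k)
    (hopt : ∀ T : Finset Ω, T.card = k → f T ≤ f Sstar)
    (Si : Finset Ω) (hSi : Si.card < k) :
    ∃ v ∉ Si, f (insert v Si) - f Si ≥ (f Sstar - f Si) / k := by
  have hk : 0 < (k : ℝ) := by
    exact_mod_cast Nat.pos_of_ne_zero (by omega)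
  by_cases hle : f Sstar - f Si ≤ 0
  · -- any v ∉ Si works
    have hne : Si ≠ Finset.univ := by
      intro h
      have : Sstar ⊆ Si := h ▸ Finset.subset_univ Sstar
      have := Finset.card_le_card this
      omega
    obtain ⟨v, hv⟩ : ∃ v, v ∉ Si := by
      by_contra h
      push_neg at h
      exact hne (Finset.eq_univ_iff_forall.mpr h)
    refine ⟨v, hv, ?_⟩
    have h1 : f Si ≤ f (insert v Si) :=
      hmono _ _ (Finset.subset_insert _ _)
    have h2 : (f Sstar - f Si) / k ≤ 0 :=
      div_nonpos_of_nonpos_of_nonneg hle (le_of_lt hk)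
    linarith
  · push_neg at hle
    have hsum : f Sstar - f Si ≤ ∑ v ∈ Sstar, (f (insert v Si) - f Si) := by
      have h1 := greedy_step_aux f hmono hsub Si Sstar
      have h2 : f Sstar ≤ f (Si ∪ Sstar) :=
        hmono _ _ Finset.subset_union_right
      linarith
    by_contra h
    push_neg at h
    have hne : Sstar.Nonempty := by
      rw [← Finset.card_pos]; omega
    have hlt : ∀ v ∈ Sstar, f (insert v Si) - f Si < (f Sstar - f Si) / k := by
      intro v _
      by_cases hvSi : v ∈ Si
      · rw [Finset.insert_eq_self.mpr hvSi]
        simpa using div_pos hle hk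
      · exact h v hvSi
    have := Finset.sum_lt_sum_of_nonempty hne hlt
    rw [Finset.sum_const, nsmul_eq_mul, hSstar_card] at this
    rw [mul_div_cancel₀ _ (ne_of_gt hk)] at this
    linarith
end

section
/- Let f be a monotone submodular function with f(∅) = 0 on finite Ω, S_i the greedy set after i steps, and S* an optimal set of size k. Defining δᵢ = f(S*) - f(Sᵢ), the greedy recursion δ_{i+1} ≤ (1 - 1/k) δᵢ holds, and hence δ_k ≤ (1 - 1/k)^k δ₀ ≤ e^{-1} f(S*). -/
/-!
Submodularity bounds the gain of adding all of `S*` to the greedy set `Sᵢ` by the sum of the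
`k` single-element gains, each at most the greedy gain; so the greedy step closes at least a
`1/k` fraction of the gap `δᵢ`. Iterating gives `(1 - 1/k)^k δ₀`, and `1 - x ≤ e^{-x}`.
-/

open Finset

section Submodular

variable {α : Type*} [DecidableEq α] {f : Finset α → ℝ}

lemma sub_le_sum_marginal_gain
    (hsub : ∀ X Y : Finset α, X ⊆ Y → ∀ v ∉ Y, f (insert v X) - f X ≥ f (insert v Y) - f Y)
    (A B : Finset α) :
    f (B ∪ A) - f B ≤ ∑ v ∈ A, (f (insert v B) - f B) := by
  induction A using Finset.induction_on with
  | empty => simp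
  | insert a A ha ih =>
    rw [sum_insert ha, union_insert]
    by_cases haBA : a ∈ B ∪ A
    · have haB : a ∈ B := (mem_union.1 haBA).resolve_right ha
      rw [insert_eq_of_mem haBA, insert_eq_of_mem haB, sub_self, zero_add]
      exact ih
    · linarith [hsub B (B ∪ A) subset_union_left a haBA]

lemma sub_le_card_mul_max_marginal_gain (hmono : Monotone f)
    (hsub : ∀ X Y : Finset α, X ⊆ Y → ∀ v ∉ Y, f (insert v X) - f X ≥ f (insert v Y) - f Y)
    {B T : Finset α} {v : α} (hmax : ∀ w ∉ B, f (insert w B) - f B ≤ f (insert v B) - f B) :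
    f T - f B ≤ T.card * (f (insert v B) - f B) := by
  have hgain : ∀ w ∈ T, f (insert w B) - f B ≤ f (insert v B) - f B := by
    intro w _
    by_cases hw : w ∈ B
    · rw [insert_eq_of_mem hw, sub_self, sub_nonneg]
      exact hmono (subset_insert v B)
    · exact hmax w hw
  calc f T - f B ≤ f (B ∪ T) - f B := sub_le_sub_right (hmono subset_union_right) _
    _ ≤ ∑ w ∈ T, (f (insert w B) - f B) := sub_le_sum_marginal_gain hsub T B
    _ ≤ T.card * (f (insert v B) - f B) := by
      simpa only [sum_const, nsmul_eq_mul] using sum_le_sum hgain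

lemma sub_insert_le_one_sub_inv_card_mul (hmono : Monotone f)
    (hsub : ∀ X Y : Finset α, X ⊆ Y → ∀ v ∉ Y, f (insert v X) - f X ≥ f (insert v Y) - f Y)
    {B T : Finset α} {v : α} (hmax : ∀ w ∉ B, f (insert w B) - f B ≤ f (insert v B) - f B) :
    f T - f (insert v B) ≤ (1 - 1 / (T.card : ℝ)) * (f T - f B) := by
  have hgap := sub_le_card_mul_max_marginal_gain (T := T) hmono hsub hmax
  have hgain : 0 ≤ f (insert v B) - f B := sub_nonneg.2 (hmono (subset_insert v B))
  rcases (T.card).eq_zero_or_pos with hT | hT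
  · rw [hT, Nat.cast_zero, div_zero, sub_zero, one_mul]
    linarith
  · have hfrac : (f T - f B) / T.card ≤ f (insert v B) - f B :=
      (div_le_iff₀' (by exact_mod_cast hT)).2 hgap
    rw [one_sub_mul, one_div_mul_eq_div]
    linarith

end Submodular

theorem greedy_recursion_general {Ω : Type*} [DecidableEq Ω]
    (f : Finset Ω → ℝ)
    (hmono : ∀ X Y : Finset Ω, X ⊆ Y → f X ≤ f Y)
    (hsub : ∀ X Y : Finset Ω, X ⊆ Y → ∀ v ∉ Y,
      f (insert v X) - f X ≥ f (insert v Y) - f Y)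
    (hempty : f ∅ = 0)
    (k : ℕ) (hk : 1 ≤ k)
    (S : ℕ → Finset Ω) (hS0 : S 0 = ∅)
    (hgreedy : ∀ i < k, ∃ v ∉ S i, S (i + 1) = insert v (S i) ∧
      ∀ w ∉ S i, f (insert w (S i)) - f (S i) ≤ f (insert v (S i)) - f (S i))
    (Sstar : Finset Ω) (hSstar_card : Sstar.card = k)
    (δ : ℕ → ℝ) (hδ : ∀ i, δ i = f Sstar - f (S i)) :
    (∀ i < k, δ (i + 1) ≤ (1 - 1 / (k : ℝ)) * δ i) ∧
    δ k ≤ (1 - 1 / (k : ℝ)) ^ k * δ 0 ∧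
    (1 - 1 / (k : ℝ)) ^ k * δ 0 ≤ f Sstar / Real.exp 1 := by
  have hmono' : Monotone f := fun X Y hXY => hmono X Y hXY
  have hstep : ∀ i < k, δ (i + 1) ≤ (1 - 1 / (k : ℝ)) * δ i := by
    intro i hi
    obtain ⟨v, -, hSi, hmax⟩ := hgreedy i hi
    rw [hδ, hδ, hSi, ← hSstar_card]
    exact sub_insert_le_one_sub_inv_card_mul hmono' hsub hmax
  have hk' : (1 : ℝ) ≤ k := by exact_mod_cast hk
  have hfactor : 0 ≤ 1 - 1 / (k : ℝ) := sub_nonneg.2 (div_le_one_of_le₀ hk' k.cast_nonneg)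
  have hδ0 : δ 0 = f Sstar := by rw [hδ, hS0, hempty, sub_zero]
  have hSstar_nonneg : 0 ≤ f Sstar := hempty ▸ hmono' (empty_subset Sstar)
  refine ⟨hstep, le_geom hfactor k hstep, ?_⟩
  rw [hδ0]
  calc (1 - 1 / (k : ℝ)) ^ k * f Sstar ≤ Real.exp (-1) * f Sstar :=
        mul_le_mul_of_nonneg_right (Real.one_sub_div_pow_le_exp_neg hk') hSstar_nonneg
    _ = f Sstar / Real.exp 1 := by rw [Real.exp_neg, inv_mul_eq_div]

theorem greedy_recursion {Ω : Type*} [Fintype Ω] [DecidableEq Ω]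
    (f : Finset Ω → ℝ)
    (hnonneg : ∀ S : Finset Ω, 0 ≤ f S)
    (hmono : ∀ X Y : Finset Ω, X ⊆ Y → f X ≤ f Y)
    (hsub : ∀ X Y : Finset Ω, X ⊆ Y → ∀ v ∉ Y,
      f (insert v X) - f X ≥ f (insert v Y) - f Y)
    (hempty : f ∅ = 0)
    (k : ℕ) (hk : 1 ≤ k) (hcard : k ≤ Fintype.card Ω)
    (S : ℕ → Finset Ω) (hS0 : S 0 = ∅)
    (hgreedy : ∀ i < k, ∃ v ∉ S i, S (i + 1) = insert v (S i) ∧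
      ∀ w ∉ S i, f (insert w (S i)) - f (S i) ≤ f (insert v (S i)) - f (S i))
    (Sstar : Finset Ω) (hSstar_card : Sstar.card = k)
    (hopt : ∀ T : Finset Ω, T.card = k → f T ≤ f Sstar)
    (δ : ℕ → ℝ) (hδ : ∀ i, δ i = f Sstar - f (S i)) :
    (∀ i < k, δ (i + 1) ≤ (1 - 1 / (k : ℝ)) * δ i) ∧
    δ k ≤ (1 - 1 / (k : ℝ)) ^ k * δ 0 ∧
    (1 - 1 / (k : ℝ)) ^ k * δ 0 ≤ f Sstar / Real.exp 1 :=
  greedy_recursion_general f hmono hsub hempty k hk S hS0 hgreedy Sstar hSstar_card δ hδ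
end
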